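/- arXiv:1811.04819 — 5 statements merged into one kernel-verified Lean document; each statement's English description precedes it below -/
import Mathlib

section
/- Let G be a group, B a G-module, and D a divisible abelian group with trivial G-action; give Hom_ℤ(B, D) the G-action (g·φ)(b) = φ(g⁻¹·b). The pairing sending a 1-cocycle f : G → Hom_ℤ(B, D) and a finitely supported 1-cycle x : G → B to ∑_{g ∈ G} f(g)(x(g)) ∈ D depends only on the cohomology class of f and the homology class of x, and the induced map H¹(G, Hom_ℤ(B, D)) → Hom_ℤ(H₁(G, B), D) is an isomorphism of abelian groups. -/
section Homology

/-- The map sending a finitely supported function `x : G →₀ A` to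
`∑ g, (g⁻¹ • x g - x g)`; its kernel is the group of 1-cycles. -/
noncomputable def paperCycleMap (G A : Type*) [Group G] [AddCommGroup A]
    [DistribMulAction G A] : (G →₀ A) →+ A :=
  Finsupp.liftAddHom fun g => DistribMulAction.toAddMonoidHom A g⁻¹ - AddMonoidHom.id A

/-- The group of 1-cycles: finitely supported `x : G →₀ A` with
`∑ g, g⁻¹ • x g = ∑ g, x g`. -/
noncomputable def paperZ1 (G A : Type*) [Group G] [AddCommGroup A]
    [DistribMulAction G A] : AddSubgroup (G →₀ A) :=
  (paperCycleMap G A).ker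

/-- The boundary map of the inhomogeneous bar complex in degree 2: a basis element
`[g₁|g₂]` with coefficient `a` goes to
`single g₂ (g₁⁻¹ • a) - single (g₁g₂) a + single g₁ a`. -/
noncomputable def paperBarD2 (G A : Type*) [Group G] [AddCommGroup A]
    [DistribMulAction G A] : ((G × G) →₀ A) →+ (G →₀ A) :=
  Finsupp.liftAddHom fun p =>
    (Finsupp.singleAddHom p.2).comp (DistribMulAction.toAddMonoidHom A p.1⁻¹)
      + Finsupp.singleAddHom p.1 - Finsupp.singleAddHom (p.1 * p.2)

/-- The group of 1-boundaries. -/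
noncomputable def paperB1 (G A : Type*) [Group G] [AddCommGroup A]
    [DistribMulAction G A] : AddSubgroup (G →₀ A) :=
  (paperBarD2 G A).range

/-- First group homology `H₁(G, A)`: 1-cycles modulo 1-boundaries. -/
noncomputable abbrev paperH1 (G A : Type*) [Group G] [AddCommGroup A]
    [DistribMulAction G A] :=
  paperZ1 G A ⧸ ((paperB1 G A).addSubgroupOf (paperZ1 G A))

end Homology

section Cohomology

/-- The action of `g ∈ G` on `Hom_ℤ(B, D)` given by `(g • φ)(b) = φ (g⁻¹ • b)`. -/
def paperConj (G : Type*) {B : Type*} (D : Type*) [Group G] [AddCommGroup B]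
    [DistribMulAction G B] [AddCommGroup D] (g : G) : (B →+ D) →+ (B →+ D) where
  toFun φ := φ.comp (DistribMulAction.toAddMonoidHom B g⁻¹)
  map_zero' := AddMonoidHom.zero_comp _
  map_add' φ ψ := AddMonoidHom.add_comp φ ψ _

/-- The group of 1-cocycles of `G` with values in `Hom_ℤ(B, D)`. -/
def paperZ1coh (G B D : Type*) [Group G] [AddCommGroup B] [DistribMulAction G B]
    [AddCommGroup D] : AddSubgroup (G → (B →+ D)) where
  carrier := {f | ∀ g h : G, f (g * h) = f g + paperConj G D g (f h)}
  zero_mem' := by intro g h; simp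
  add_mem' := by intro f f' hf hf' g h; simp only [Pi.add_apply, hf g h, hf' g h, map_add]; abel
  neg_mem' := by intro f hf g h; simp only [Pi.neg_apply, hf g h, map_neg]; abel

/-- The coboundary map `Hom_ℤ(B, D) → (G → Hom_ℤ(B, D))`, `φ ↦ (g ↦ g•φ - φ)`. -/
def paperCobd (G B D : Type*) [Group G] [AddCommGroup B] [DistribMulAction G B]
    [AddCommGroup D] : (B →+ D) →+ (G → (B →+ D)) where
  toFun φ := fun g => paperConj G D g φ - φ
  map_zero' := by funext g; simp
  map_add' φ ψ := by funext g; simp; abel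

/-- First group cohomology `H¹(G, Hom_ℤ(B, D))`: 1-cocycles modulo 1-coboundaries. -/
abbrev paperH1coh (G B D : Type*) [Group G] [AddCommGroup B] [DistribMulAction G B]
    [AddCommGroup D] :=
  paperZ1coh G B D ⧸ ((paperCobd G B D).range.addSubgroupOf (paperZ1coh G B D))

end Cohomology


section Aux

variable {G B D : Type} [Group G] [AddCommGroup B] [DistribMulAction G B] [AddCommGroup D]

-- extension lemma from divisibility
lemma ext_from_subgroup {C : Type} [AddCommGroup C] [DivisibleBy D ℤ]
    (A : AddSubgroup C) (f : A →+ D) : ∃ g : C →+ D, ∀ a : A, g a = f a := by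
  have inj : Module.Injective ℤ D := (Module.Baer.of_divisible D).injective
  obtain ⟨h, hh⟩ := Module.Injective.extension_property ℤ D A C
    A.subtype.toIntLinearMap (by exact Subtype.coe_injective) f.toIntLinearMap
  exact ⟨h.toAddMonoidHom, fun a => congrFun (congrArg DFunLike.coe hh) a⟩

end Aux


variable {G B D : Type} [Group G] [AddCommGroup B] [DistribMulAction G B] [AddCommGroup D]

lemma paperCycleMap_single (g : G) (b : B) :
    paperCycleMap G B (Finsupp.single g b) = g⁻¹ • b - b := by
  simp [paperCycleMap]

lemma paperBarD2_single (p : G × G) (b : B) :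
    paperBarD2 G B (Finsupp.single p b) =
      Finsupp.single p.2 (p.1⁻¹ • b) + Finsupp.single p.1 b - Finsupp.single (p.1 * p.2) b := by
  simp [paperBarD2]

lemma d1_comp_d2 : (paperCycleMap G B).comp (paperBarD2 G B) = 0 := by
  ext p b
  simp only [AddMonoidHom.comp_apply, Finsupp.singleAddHom_apply, paperBarD2_single,
    AddMonoidHom.zero_apply, map_add, map_sub, paperCycleMap_single, mul_inv_rev, mul_smul,
    smul_sub]
  abel

lemma paperB1_le_paperZ1 : paperB1 G B ≤ paperZ1 G B := by
  rintro x ⟨y, rfl⟩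
  have := congrFun (congrArg DFunLike.coe (d1_comp_d2 (G := G) (B := B))) y
  simpa [paperZ1, AddMonoidHom.mem_ker] using this

lemma mem_paperZ1coh_iff (f : G → (B →+ D)) :
    f ∈ paperZ1coh G B D ↔ (Finsupp.liftAddHom f).comp (paperBarD2 G B) = 0 := by
  constructor
  · intro hf
    ext p b
    have := hf p.1 p.2
    simp only [AddMonoidHom.comp_apply, Finsupp.singleAddHom_apply, paperBarD2_single,
      AddMonoidHom.zero_apply, map_add, map_sub, Finsupp.liftAddHom_apply_single, this,
      paperConj, AddMonoidHom.coe_mk, ZeroHom.coe_mk, AddMonoidHom.add_apply,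
      AddMonoidHom.coe_comp, Function.comp_apply, DistribMulAction.toAddMonoidHom_apply]
    abel
  · intro hf g h
    ext b
    have := congrFun (congrArg DFunLike.coe hf) (Finsupp.single (g, h) b)
    simp only [AddMonoidHom.comp_apply, paperBarD2_single, AddMonoidHom.zero_apply, map_add,
      map_sub, Finsupp.liftAddHom_apply_single] at this
    rw [sub_eq_zero] at this
    simp only [AddMonoidHom.add_apply, paperConj, AddMonoidHom.coe_mk, ZeroHom.coe_mk,
      AddMonoidHom.coe_comp, Function.comp_apply, DistribMulAction.toAddMonoidHom_apply]
    rw [← this]; abel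

lemma lift_paperCobd (φ : B →+ D) :
    (Finsupp.liftAddHom (paperCobd G B D φ) : (G →₀ B) →+ D) = φ.comp (paperCycleMap G B) := by
  ext g b
  simp [paperCobd, paperConj, paperCycleMap_single]

section Main

variable {G B D : Type} [Group G] [AddCommGroup B] [DistribMulAction G B] [AddCommGroup D]

/-- The pairing of a 1-cocycle with chains. -/
noncomputable def pairF (f : paperZ1coh G B D) : (G →₀ B) →+ D :=
  Finsupp.liftAddHom f.1

lemma pairF_vanish_B1 (f : paperZ1coh G B D) {x : G →₀ B} (hx : x ∈ paperB1 G B) :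
    pairF f x = 0 := by
  obtain ⟨y, rfl⟩ := hx
  have := (mem_paperZ1coh_iff f.1).mp f.2
  exact congrFun (congrArg DFunLike.coe this) y

/-- The pairing descends to homology. -/
noncomputable def pairH (f : paperZ1coh G B D) : paperH1 G B →+ D :=
  QuotientAddGroup.lift _ ((pairF f).comp (paperZ1 G B).subtype) (by
    intro x hx
    exact pairF_vanish_B1 f hx)

lemma pairH_mk (f : paperZ1coh G B D) (x : paperZ1 G B) :
    pairH f (QuotientAddGroup.mk x) = pairF f x := rfl

/-- The pairing as a homomorphism on cocycles. -/
noncomputable def pairPhi : paperZ1coh G B D →+ (paperH1 G B →+ D) where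
  toFun := pairH
  map_zero' := by
    refine AddMonoidHom.ext fun q => ?_
    refine QuotientAddGroup.induction_on q fun z => ?_
    simp [pairH_mk, pairF]
  map_add' f g := by
    refine AddMonoidHom.ext fun q => ?_
    refine QuotientAddGroup.induction_on q fun z => ?_
    simp [pairH_mk, pairF]

/-- The pairing descends to cohomology. -/
noncomputable def pairE : paperH1coh G B D →+ (paperH1 G B →+ D) :=
  QuotientAddGroup.lift _ pairPhi (by
    intro f hf
    obtain ⟨φ, hφ⟩ := hf
    refine AddMonoidHom.ext fun q => ?_
    refine QuotientAddGroup.induction_on q fun z => ?_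
    show pairH f (QuotientAddGroup.mk z) = 0
    rw [pairH_mk]
    have h1 : pairF f = φ.comp (paperCycleMap G B) := by
      show Finsupp.liftAddHom f.1 = _
      rw [show (f.1 : G → (B →+ D)) = paperCobd G B D φ from hφ.symm]
      exact lift_paperCobd φ
    rw [h1]
    have hz : paperCycleMap G B z.1 = 0 := z.2
    simp [hz])

lemma pairE_mk (f : paperZ1coh G B D) (x : paperZ1 G B) :
    pairE (QuotientAddGroup.mk f) (QuotientAddGroup.mk x) = pairF f x := rfl

end Main

section Main2

variable {G B D : Type} [Group G] [AddCommGroup B] [DistribMulAction G B] [AddCommGroup D]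

lemma pairE_injective [DivisibleBy D ℤ] :
    Function.Injective (pairE (G := G) (B := B) (D := D)) := by
  rw [injective_iff_map_eq_zero]
  intro a
  refine QuotientAddGroup.induction_on a fun f => ?_
  intro hf
  rw [QuotientAddGroup.eq_zero_iff]
  rw [AddSubgroup.mem_addSubgroupOf]
  have hker : ∀ x ∈ (paperCycleMap G B).ker, pairF f x = 0 := by
    intro x hx
    have : pairE (QuotientAddGroup.mk f) (QuotientAddGroup.mk (⟨x, hx⟩ : paperZ1 G B)) = 0 := by
      rw [hf]; rfl
    rwa [pairE_mk] at this
  let q : ((G →₀ B) ⧸ (paperCycleMap G B).ker) →+ D :=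
    QuotientAddGroup.lift _ (pairF f) hker
  let eqv := QuotientAddGroup.quotientKerEquivRange (paperCycleMap G B)
  obtain ⟨φ, hφ⟩ := ext_from_subgroup (paperCycleMap G B).range
    (q.comp eqv.symm.toAddMonoidHom)
  have key : φ.comp (paperCycleMap G B) = pairF f := by
    refine AddMonoidHom.ext fun x => ?_
    have hm : paperCycleMap G B x ∈ (paperCycleMap G B).range := ⟨x, rfl⟩
    have h1 := hφ ⟨paperCycleMap G B x, hm⟩
    have h2 : eqv.symm ⟨paperCycleMap G B x, hm⟩ = QuotientAddGroup.mk x := by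
      apply eqv.injective
      rw [AddEquiv.apply_symm_apply]
      exact Subtype.ext rfl
    simp only [AddMonoidHom.comp_apply]
    rw [h1]
    simp only [AddMonoidHom.coe_comp, Function.comp_apply, AddEquiv.coe_toAddMonoidHom]
    rw [h2]
    rfl
  refine ⟨φ, ?_⟩
  apply (Finsupp.liftAddHom (α := G) (M := B) (N := D)).injective
  rw [lift_paperCobd]
  exact key

lemma pairE_surjective [DivisibleBy D ℤ] :
    Function.Surjective (pairE (G := G) (B := B) (D := D)) := by
  intro h
  obtain ⟨F, hF⟩ := ext_from_subgroup (paperZ1 G B)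
    (h.comp (QuotientAddGroup.mk' ((paperB1 G B).addSubgroupOf (paperZ1 G B))))
  have hf : (Finsupp.liftAddHom.symm F : G → (B →+ D)) ∈ paperZ1coh G B D := by
    rw [mem_paperZ1coh_iff, AddEquiv.apply_symm_apply]
    refine AddMonoidHom.ext fun y => ?_
    have h1 : paperBarD2 G B y ∈ paperZ1 G B := paperB1_le_paperZ1 ⟨y, rfl⟩
    have h2 := hF ⟨paperBarD2 G B y, h1⟩
    simp only [AddMonoidHom.comp_apply, AddMonoidHom.zero_apply]
    rw [show F (paperBarD2 G B y) = _ from h2]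
    have h3 : QuotientAddGroup.mk' ((paperB1 G B).addSubgroupOf (paperZ1 G B))
        ⟨paperBarD2 G B y, h1⟩ = 0 := by
      rw [QuotientAddGroup.mk'_apply, QuotientAddGroup.eq_zero_iff,
        AddSubgroup.mem_addSubgroupOf]
      exact ⟨y, rfl⟩
    rw [AddMonoidHom.comp_apply, h3, map_zero]
  refine ⟨QuotientAddGroup.mk ⟨Finsupp.liftAddHom.symm F, hf⟩, ?_⟩
  refine AddMonoidHom.ext fun q => ?_
  refine QuotientAddGroup.induction_on q fun z => ?_
  rw [pairE_mk]
  show Finsupp.liftAddHom (Finsupp.liftAddHom.symm F) z = _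
  rw [AddEquiv.apply_symm_apply]
  exact hF z

end Main2


/-- Let `G` be a group, `B` a `G`-module and `D` a divisible abelian
group with trivial `G`-action, with `Hom_ℤ(B, D)` carrying the action
`(g·φ)(b) = φ(g⁻¹·b)`.  The pairing sending a 1-cocycle `f : G → Hom_ℤ(B, D)` and a
finitely supported 1-cycle `x : G → B` to `∑_{g} f(g)(x(g))` depends only on the
cohomology class of `f` and the homology class of `x`, and induces an isomorphism of
abelian groups `H¹(G, Hom_ℤ(B, D)) ≅ Hom_ℤ(H₁(G, B), D)`. -/
theorem stmt2 {G B D : Type} [Group G] [AddCommGroup B] [DistribMulAction G B]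
    [AddCommGroup D] (hD : ∀ (d : D) (n : ℕ), 0 < n → ∃ e : D, n • e = d) :
    ∃ e : paperH1coh G B D ≃+ (paperH1 G B →+ D),
      ∀ (f : paperZ1coh G B D) (x : paperZ1 G B),
        e (QuotientAddGroup.mk f) (QuotientAddGroup.mk x)
          = (x : G →₀ B).sum fun g b => (f : G → (B →+ D)) g b := by
  letI : DivisibleBy D ℕ :=
    { div := fun a n => if h : 0 < n then Classical.choose (hD a n h) else 0
      div_zero := fun a => by simp
      div_cancel := fun {n} a hn => by
        simp only [dif_pos (Nat.pos_of_ne_zero hn)]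
        exact Classical.choose_spec (hD a n (Nat.pos_of_ne_zero hn)) }
  letI : DivisibleBy D ℤ := AddGroup.divisibleByIntOfDivisibleByNat D
  refine ⟨AddEquiv.ofBijective pairE ⟨pairE_injective, pairE_surjective⟩, fun f x => ?_⟩
  show pairE (QuotientAddGroup.mk f) (QuotientAddGroup.mk x) = _
  rw [pairE_mk]
  exact Finsupp.liftAddHom_apply f.1 x.1
end

section
/- Let G be a group, H a normal subgroup of finite index, and A a G-module on which H acts trivially. Fix a set R of coset representatives of H in G, so that for every r ∈ R and w ∈ G there are unique u(r,w) ∈ H and ρ(r,w) ∈ R with r·w = u(r,w)·ρ(r,w). For a finitely supported 1-cycle x : G → A define y : H → A by y(h) = ∑_{(r,w) ∈ R×G with u(r,w) = h} r·x(w). Then: (i) y is a finitely supported 1-cycle for H; (ii) if x is a 1-boundary then y is a 1-boundary, so the assignment [x] ↦ [y] is a well-defined group homomorphism Tr : H₁(G, A) → H₁(H, A); (iii) the image of Tr is contained in the invariants of H₁(H, A) under the action of G in which g ∈ G acts via the automorphism h ↦ ghg⁻¹ of H and the map a ↦ g·a on A. -/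
/-!
Write `t * w = u(t, w) * ρ(t, w)` for `t` in the transversal `T`; this decomposition is
`hT.equiv (t * w)`. The transfer is induced by the chain map `[w] ↦ ∑ₜ t • [u(t, w)]`, lifted
to degree 2 by `[g₁|g₂] ↦ ∑ₜ t • [u(t, g₁) | u(ρ(t, g₁), g₂)]`; the two commute with the bar
differentials by the cocycle identity `u(t, g₁g₂) = u(t, g₁) u(ρ(t, g₁), g₂)` and because
`t ↦ ρ(t, w)` permutes `T`, so boundaries go to boundaries.

For invariance write `g * t = c(t) * k(t)`. Then `g u(t, w) g⁻¹ = c(t) u(k t, w) c(ρ(t, w))⁻¹`,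
and since `H` acts trivially, `[h₁h₂h₃⁻¹] ≡ [h₁] + [h₂] - [h₃]` modulo boundaries. After
reindexing by the permutation `k`, the conjugate of the transfer of `x` differs from it by a
boundary plus the terms `[c(t)] - [c(ρ(t, w))]` with coefficient `g t • x(w)`; summed over `w`
and `t`, these cancel because `x` is a cycle.
-/

open Finsupp

variable {G A : Type*} [Group G] [AddCommGroup A] [DistribMulAction G A]

theorem paperBarD2_single_s3 (g₁ g₂ : G) (a : A) :
    paperBarD2 G A (single (g₁, g₂) a) =
      single g₂ (g₁⁻¹ • a) + single g₁ a - single (g₁ * g₂) a := by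
  simp [paperBarD2]

theorem sum_inv_smul_eq_sum_of_mem_paperZ1 {x : G →₀ A} (hx : x ∈ paperZ1 G A) :
    ∑ w ∈ x.support, w⁻¹ • x w = ∑ w ∈ x.support, x w := by
  simpa [paperZ1, paperCycleMap, Finsupp.sum, sub_eq_zero] using hx

theorem single_one_mem_paperB1 (a : A) : single (1 : G) a ∈ paperB1 G A :=
  ⟨single (1, 1) a, by simp [paperBarD2_single_s3]⟩

section TrivialAction

variable (htriv : ∀ (g : G) (a : A), g • a = a)
include htriv

theorem mem_paperZ1_of_smul_eq_self (z : G →₀ A) : z ∈ paperZ1 G A := by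
  simp [paperZ1, paperCycleMap, Finsupp.sum, htriv]

theorem single_mul_sub_mem_paperB1 (g₁ g₂ : G) (a : A) :
    single (g₁ * g₂) a - single g₁ a - single g₂ a ∈ paperB1 G A :=
  ⟨-single (g₁, g₂) a, by rw [map_neg, paperBarD2_single_s3, htriv]; abel⟩

theorem single_inv_add_mem_paperB1 (g : G) (a : A) :
    single g⁻¹ a + single g a ∈ paperB1 G A := by
  have := sub_mem (single_one_mem_paperB1 a) (single_mul_sub_mem_paperB1 htriv g g⁻¹ a)
  rw [mul_inv_cancel] at this
  convert this using 1
  abel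

theorem single_mul_mul_inv_sub_mem_paperB1 (g₁ g₂ g₃ : G) (a : A) :
    single (g₁ * g₂ * g₃⁻¹) a - single g₁ a - single g₂ a + single g₃ a ∈ paperB1 G A := by
  have := add_mem (add_mem (single_mul_sub_mem_paperB1 htriv (g₁ * g₂) g₃⁻¹ a)
    (single_mul_sub_mem_paperB1 htriv g₁ g₂ a)) (single_inv_add_mem_paperB1 htriv g₃ a)
  convert this using 1
  abel

end TrivialAction

theorem Subgroup.isComplement_of_existsUnique_mul {H : Subgroup G} {R : Set G}
    (hR : ∀ g : G, ∃! r : G, r ∈ R ∧ ∃ h ∈ H, g = h * r) : IsComplement (H : Set G) R := by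
  refine Subgroup.isComplement_iff_existsUnique_mul_inv_mem.2 fun g => ?_
  obtain ⟨r, ⟨hr, h, hh, rfl⟩, hunique⟩ := hR g
  refine ⟨⟨r, hr⟩, by simpa using hh, fun t ht => Subtype.ext (hunique t ⟨t.2, _, ht, by group⟩)⟩

namespace Subgroup.IsComplement

variable {H : Subgroup G} {T : Set G} (hT : IsComplement (H : Set G) T)
include hT

theorem equiv_mul_of_mem {h t : G} (hh : h ∈ H) (ht : t ∈ T) :
    hT.equiv (h * t) = (⟨h, hh⟩, ⟨t, ht⟩) :=
  hT.equiv.apply_symm_apply (⟨h, hh⟩, ⟨t, ht⟩)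

theorem equiv_mul_mul (x w₁ w₂ : G) :
    hT.equiv (x * w₁ * w₂) =
      ((hT.equiv (x * w₁)).1 * (hT.equiv ((hT.equiv (x * w₁)).2 * w₂)).1,
        (hT.equiv ((hT.equiv (x * w₁)).2 * w₂)).2) := by
  conv_lhs => rw [← hT.equiv_fst_mul_equiv_snd (x * w₁), mul_assoc]
  exact hT.equiv_mul_left _ _

theorem snd_equiv_mul_mul_inv {t : G} (ht : t ∈ T) (w : G) :
    ((hT.equiv ((hT.equiv (t * w)).2 * w⁻¹)).2 : G) = t := by
  have := congrArg (fun p => (p.2 : G)) (hT.equiv_mul_mul t w w⁻¹)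
  simp only [mul_inv_cancel_right] at this
  rw [← this, hT.equiv_snd_eq_self_of_mem_of_one_mem H.one_mem ht]

theorem snd_equiv_inv_mul_snd_equiv_mul [H.Normal] {t : G} (ht : t ∈ T) (g : G) :
    ((hT.equiv (g⁻¹ * (hT.equiv (g * t)).2)).2 : G) = t := by
  have hconj : g⁻¹ * ((hT.equiv (g * t)).1 : G)⁻¹ * g ∈ H := by
    simpa using ‹H.Normal›.conj_mem _ (inv_mem (hT.equiv (g * t)).1.2) g⁻¹
  rw [hT.equiv_snd_eq_inv_mul (g * t)]
  rw [show g⁻¹ * (((hT.equiv (g * t)).1 : G)⁻¹ * (g * t))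
      = (g⁻¹ * ((hT.equiv (g * t)).1 : G)⁻¹ * g) * t by group,
    hT.equiv_mul_left_of_mem hconj, hT.equiv_snd_eq_self_of_mem_of_one_mem H.one_mem ht]

theorem snd_equiv_smul (htriv : ∀ h ∈ H, ∀ a : A, h • a = a) (x : G) (a : A) :
    ((hT.equiv x).2 : G) • a = x • a := by
  conv_rhs => rw [← hT.equiv_fst_mul_equiv_snd x, mul_smul, htriv _ (hT.equiv x).1.2]

theorem sum_snd_equiv_mul_right {M : Type*} [AddCommMonoid M] (hTfin : T.Finite) (f : G → M)
    (w : G) : ∑ t ∈ hTfin.toFinset, f (hT.equiv (t * w)).2 = ∑ t ∈ hTfin.toFinset, f t := by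
  refine Finset.sum_nbij' (fun t => (hT.equiv (t * w)).2) (fun t => (hT.equiv (t * w⁻¹)).2)
    (by simp) (by simp) (fun t ht => ?_) (fun t ht => ?_) (fun _ _ => rfl)
  · exact hT.snd_equiv_mul_mul_inv (by simpa using ht) w
  · simpa using hT.snd_equiv_mul_mul_inv (by simpa using ht) w⁻¹

theorem sum_snd_equiv_mul_left [H.Normal] {M : Type*} [AddCommMonoid M] (hTfin : T.Finite)
    (f : G → M) (g : G) :
    ∑ t ∈ hTfin.toFinset, f (hT.equiv (g * t)).2 = ∑ t ∈ hTfin.toFinset, f t := by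
  refine Finset.sum_nbij' (fun t => (hT.equiv (g * t)).2) (fun t => (hT.equiv (g⁻¹ * t)).2)
    (by simp) (by simp) (fun t ht => ?_) (fun t ht => ?_) (fun _ _ => rfl)
  · exact hT.snd_equiv_inv_mul_snd_equiv_mul (by simpa using ht) g
  · simpa using hT.snd_equiv_inv_mul_snd_equiv_mul (by simpa using ht) g⁻¹

theorem conjNormal_fst_equiv_mul [H.Normal] (g t w : G) :
    MulAut.conjNormal g (hT.equiv (t * w)).1 =
      (hT.equiv (g * t)).1 * (hT.equiv ((hT.equiv (g * t)).2 * w)).1 *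
        ((hT.equiv (g * (hT.equiv (t * w)).2)).1)⁻¹ := by
  have hsplit : g * t * w = (g * (hT.equiv (t * w)).1 * g⁻¹) * (g * (hT.equiv (t * w)).2) := by
    conv_lhs => rw [mul_assoc, ← hT.equiv_fst_mul_equiv_snd (t * w)]
    group
  have key : g * (hT.equiv (t * w)).1 * g⁻¹ * (hT.equiv (g * (hT.equiv (t * w)).2)).1 =
      (hT.equiv (g * t)).1 * (hT.equiv ((hT.equiv (g * t)).2 * w)).1 := by
    have := congrArg (fun p => (p.1 : G)) (hT.equiv_mul_mul g t w)
    rwa [hsplit, hT.equiv_mul_left_of_mem (‹H.Normal›.conj_mem _ (hT.equiv (t * w)).1.2 g)] at this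
  ext
  change g * (hT.equiv (t * w)).1 * g⁻¹ = (hT.equiv (g * t)).1 *
    (hT.equiv ((hT.equiv (g * t)).2 * w)).1 * ((hT.equiv (g * (hT.equiv (t * w)).2)).1 : G)⁻¹
  rw [← key, mul_inv_cancel_right]

end Subgroup.IsComplement

section Transfer

open Subgroup

variable {H : Subgroup G} {T : Set G} (hT : IsComplement (H : Set G) T) (hTfin : T.Finite)

noncomputable def transferChain : (G →₀ A) →+ (H →₀ A) :=
  liftAddHom fun w => ∑ t ∈ hTfin.toFinset,
    (singleAddHom ((hT.equiv (t * w)).1 : H)).comp (DistribSMul.toAddMonoidHom A t)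

theorem transferChain_single (w : G) (a : A) :
    transferChain hT hTfin (single w a) =
      ∑ t ∈ hTfin.toFinset, single ((hT.equiv (t * w)).1 : H) (t • a) := by
  simp [transferChain]

theorem transferChain_eq_sum (x : G →₀ A) :
    transferChain hT hTfin x =
      ∑ t ∈ hTfin.toFinset, ∑ w ∈ x.support, single ((hT.equiv (t * w)).1 : H) (t • x w) := by
  conv_lhs => rw [← x.sum_single]
  rw [map_finsuppSum, Finsupp.sum, Finset.sum_comm]
  simp only [transferChain_single]

theorem transferChain_apply [DecidableEq G] {u : G → G → G}
    (hu : ∀ t ∈ T, ∀ w, ((hT.equiv (t * w)).1 : G) = u t w) (x : G →₀ A) (h : H) :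
    transferChain hT hTfin x h =
      ∑ t ∈ hTfin.toFinset, ∑ w ∈ x.support, if u t w = h then t • x w else 0 := by
  simp only [transferChain_eq_sum, finsetSum_apply, single_apply]
  refine Finset.sum_congr rfl fun t ht => Finset.sum_congr rfl fun w _ => ?_
  exact if_congr (by rw [← hu t (by simpa using ht), Subtype.ext_iff]) rfl rfl

noncomputable def transferChain₂ : ((G × G) →₀ A) →+ ((H × H) →₀ A) :=
  liftAddHom fun p => ∑ t ∈ hTfin.toFinset,
    (singleAddHom
      (((hT.equiv (t * p.1)).1 : H), ((hT.equiv ((hT.equiv (t * p.1)).2 * p.2)).1 : H))).comp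
        (DistribSMul.toAddMonoidHom A t)

theorem transferChain₂_single (g₁ g₂ : G) (a : A) :
    transferChain₂ hT hTfin (single (g₁, g₂) a) = ∑ t ∈ hTfin.toFinset,
      single (((hT.equiv (t * g₁)).1 : H), ((hT.equiv ((hT.equiv (t * g₁)).2 * g₂)).1 : H))
        (t • a) := by
  simp [transferChain₂]

theorem paperBarD2_comp_transferChain₂ (htriv : ∀ h ∈ H, ∀ a : A, h • a = a) :
    (paperBarD2 H A).comp (transferChain₂ hT hTfin) =
      (transferChain hT hTfin).comp (paperBarD2 G A) := by
  refine addHom_ext fun ⟨g₁, g₂⟩ a => ?_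
  have hHtriv : ∀ (h : H) (b : A), h • b = b := fun h => htriv h h.2
  have hsmul : ∀ t, ((hT.equiv (t * g₁)).2 : G) • g₁⁻¹ • a = t • a := fun t => by
    rw [hT.snd_equiv_smul htriv, smul_smul, mul_inv_cancel_right]
  have hcocycle : ∀ t, ((hT.equiv (t * (g₁ * g₂))).1 : H) =
      (hT.equiv (t * g₁)).1 * (hT.equiv ((hT.equiv (t * g₁)).2 * g₂)).1 := fun t => by
    rw [← mul_assoc, hT.equiv_mul_mul]
  simp only [AddMonoidHom.comp_apply, transferChain₂_single, map_sum, paperBarD2_single_s3,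
    transferChain_single, map_add, map_sub, Finset.sum_add_distrib, Finset.sum_sub_distrib,
    hcocycle, hHtriv]
  congr 2
  rw [← hT.sum_snd_equiv_mul_right hTfin
    (fun s => single ((hT.equiv (s * g₂)).1 : H) (s • g₁⁻¹ • a)) g₁]
  simp only [hsmul]

theorem transferChain_mem_paperB1 (htriv : ∀ h ∈ H, ∀ a : A, h • a = a) {x : G →₀ A}
    (hx : x ∈ paperB1 G A) : transferChain hT hTfin x ∈ paperB1 H A := by
  obtain ⟨c, rfl⟩ := hx
  exact ⟨transferChain₂ hT hTfin c,
    DFunLike.congr_fun (paperBarD2_comp_transferChain₂ hT hTfin htriv) c⟩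

theorem sum_sum_snd_equiv_mul_of_mem_paperZ1 (htriv : ∀ h ∈ H, ∀ a : A, h • a = a)
    {M : Type*} [AddCommMonoid M] (F : G → A →+ M) {x : G →₀ A} (hx : x ∈ paperZ1 G A) :
    ∑ t ∈ hTfin.toFinset, ∑ w ∈ x.support, F (hT.equiv (t * w)).2 (t • x w) =
      ∑ t ∈ hTfin.toFinset, ∑ w ∈ x.support, F t (t • x w) := by
  have hsmul : ∀ t w, t • x w = ((hT.equiv (t * w)).2 : G) • w⁻¹ • x w := fun t w => by
    rw [hT.snd_equiv_smul htriv, smul_smul, mul_inv_cancel_right]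
  calc ∑ t ∈ hTfin.toFinset, ∑ w ∈ x.support, F (hT.equiv (t * w)).2 (t • x w)
      = ∑ w ∈ x.support, ∑ t ∈ hTfin.toFinset, F t (t • w⁻¹ • x w) := by
        rw [Finset.sum_comm]
        refine Finset.sum_congr rfl fun w _ => ?_
        rw [← hT.sum_snd_equiv_mul_right hTfin (fun s => F s (s • w⁻¹ • x w)) w]
        exact Finset.sum_congr rfl fun t _ => by rw [hsmul t w]
    _ = ∑ t ∈ hTfin.toFinset, F t (t • ∑ w ∈ x.support, w⁻¹ • x w) := by
        rw [Finset.sum_comm]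
        simp only [Finset.smul_sum, map_sum]
    _ = ∑ t ∈ hTfin.toFinset, ∑ w ∈ x.support, F t (t • x w) := by
        rw [sum_inv_smul_eq_sum_of_mem_paperZ1 hx]
        simp only [Finset.smul_sum, map_sum]

end Transfer

section Conjugation

open Subgroup

variable {H : Subgroup G} [H.Normal]

noncomputable def conjChain (g : G) : (H →₀ A) →+ (H →₀ A) :=
  (Finsupp.domCongr (MulAut.conjNormal g).toEquiv).toAddMonoidHom.comp
    (mapRange.addMonoidHom (DistribSMul.toAddMonoidHom A g))

theorem conjChain_apply (g : G) (y : H →₀ A) (h : H) :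
    conjChain g y h = g • y ((MulAut.conjNormal g).symm h) := by
  simp [conjChain]

theorem conjChain_single (g : G) (h : H) (a : A) :
    conjChain g (single h a) = single (MulAut.conjNormal g h) (g • a) := by
  simp [conjChain]

variable {T : Set G} (hT : IsComplement (H : Set G) T) (hTfin : T.Finite)

theorem conjChain_transferChain_sub_mem_paperB1 (htriv : ∀ h ∈ H, ∀ a : A, h • a = a) (g : G)
    {x : G →₀ A} (hx : x ∈ paperZ1 G A) :
    conjChain g (transferChain hT hTfin x) - transferChain hT hTfin x ∈ paperB1 H A := by
  have hHtriv : ∀ (h : H) (b : A), h • b = b := fun h => htriv h h.2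
  set c : G → H := fun t => (hT.equiv (g * t)).1
  set u : G → G → H := fun t w => (hT.equiv (t * w)).1
  have hY : transferChain hT hTfin x = ∑ t ∈ hTfin.toFinset, ∑ w ∈ x.support,
      single (u (hT.equiv (g * t)).2 w) (g • t • x w) := by
    rw [transferChain_eq_sum, ← hT.sum_snd_equiv_mul_left hTfin _ g]
    refine Finset.sum_congr rfl fun t _ => Finset.sum_congr rfl fun w _ => ?_
    rw [hT.snd_equiv_smul htriv, mul_smul]
  have hY' : conjChain g (transferChain hT hTfin x) = ∑ t ∈ hTfin.toFinset, ∑ w ∈ x.support,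
      single (c t * u (hT.equiv (g * t)).2 w * (c (hT.equiv (t * w)).2)⁻¹) (g • t • x w) := by
    simp only [transferChain_eq_sum, map_sum]
    refine Finset.sum_congr rfl fun t _ => Finset.sum_congr rfl fun w _ => ?_
    rw [conjChain_single, hT.conjNormal_fst_equiv_mul]
  have hcorr :
      ∑ t ∈ hTfin.toFinset, ∑ w ∈ x.support, single (c (hT.equiv (t * w)).2) (g • t • x w) =
        ∑ t ∈ hTfin.toFinset, ∑ w ∈ x.support, single (c t) (g • t • x w) :=
    sum_sum_snd_equiv_mul_of_mem_paperZ1 hT hTfin htriv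
      (fun s => (singleAddHom (c s)).comp (DistribSMul.toAddMonoidHom A g)) hx
  have hsplit : conjChain g (transferChain hT hTfin x) - transferChain hT hTfin x =
      ∑ t ∈ hTfin.toFinset, ∑ w ∈ x.support,
        (single (c t * u (hT.equiv (g * t)).2 w * (c (hT.equiv (t * w)).2)⁻¹) (g • t • x w) -
          single (c t) (g • t • x w) - single (u (hT.equiv (g * t)).2 w) (g • t • x w) +
          single (c (hT.equiv (t * w)).2) (g • t • x w)) +
      (∑ t ∈ hTfin.toFinset, ∑ w ∈ x.support, single (c t) (g • t • x w) -
        ∑ t ∈ hTfin.toFinset, ∑ w ∈ x.support, single (c (hT.equiv (t * w)).2) (g • t • x w)) := by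
    rw [hY', hY]
    simp only [Finset.sum_add_distrib, Finset.sum_sub_distrib]
    abel
  rw [hsplit, hcorr, sub_self, add_zero]
  exact sum_mem fun t _ => sum_mem fun w _ => single_mul_mul_inv_sub_mem_paperB1 hHtriv _ _ _ _

end Conjugation

/-- Let `G` be a group, `H` a normal subgroup of finite index acting
trivially on the `G`-module `A`, and `R` a set of coset representatives, so that each
`r·w` (`r ∈ R`, `w ∈ G`) is uniquely `u(r,w)·ρ(r,w)` with `u(r,w) ∈ H`, `ρ(r,w) ∈ R`.
For a finitely supported 1-cycle `x : G → A` put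
`y h = ∑_{(r,w), u(r,w) = h} r • x w`.  Then (i) `y` is a finitely supported 1-cycle for
`H`; (ii) `[x] ↦ [y]` is a well-defined homomorphism `Tr : H₁(G, A) → H₁(H, A)`; and
(iii) the image of `Tr` consists of classes invariant under the action of `G` on
`H₁(H, A)` (acting by `h ↦ g h g⁻¹` on `H` and by `g` on `A`). -/
theorem stmt3 {G A : Type} [Group G] [AddCommGroup A] [DistribMulAction G A]
    [DecidableEq G] (H : Subgroup G) [hN : H.Normal]
    (htriv : ∀ h ∈ H, ∀ a : A, h • a = a)
    (R : Set G) (hRfin : R.Finite)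
    (hR : ∀ g : G, ∃! r : G, r ∈ R ∧ ∃ h ∈ H, g = h * r)
    (u ρ : G → G → G)
    (huρ : ∀ r ∈ R, ∀ w : G, u r w ∈ H ∧ ρ r w ∈ R ∧ r * w = u r w * ρ r w) :
    (∀ x : paperZ1 G A, ∃ y : paperZ1 (↥H) A, ∀ h : ↥H,
        (y : (↥H) →₀ A) h
          = ∑ r ∈ hRfin.toFinset, ∑ w ∈ (x : G →₀ A).support,
              (if u r w = (h : G) then r • (x : G →₀ A) w else 0)) ∧
      ∃ Tr : paperH1 G A →+ paperH1 (↥H) A,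
        (∀ (x : paperZ1 G A) (y : paperZ1 (↥H) A),
          (∀ h : ↥H, (y : (↥H) →₀ A) h
              = ∑ r ∈ hRfin.toFinset, ∑ w ∈ (x : G →₀ A).support,
                  (if u r w = (h : G) then r • (x : G →₀ A) w else 0)) →
          Tr (QuotientAddGroup.mk x) = QuotientAddGroup.mk y) ∧
        (∀ (g : G) (x : paperZ1 G A) (y y' : paperZ1 (↥H) A),
          (∀ h : ↥H, (y : (↥H) →₀ A) h
              = ∑ r ∈ hRfin.toFinset, ∑ w ∈ (x : G →₀ A).support,
                  (if u r w = (h : G) then r • (x : G →₀ A) w else 0)) →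
          (∀ h : ↥H, (y' : (↥H) →₀ A) h
              = g • (y : (↥H) →₀ A)
                  ⟨g⁻¹ * (h : G) * g, by simpa using hN.conj_mem _ h.2 g⁻¹⟩) →
          (QuotientAddGroup.mk y' : paperH1 (↥H) A) = QuotientAddGroup.mk y) := by
  have hT : Subgroup.IsComplement (H : Set G) R := Subgroup.isComplement_of_existsUnique_mul hR
  have hu : ∀ r ∈ R, ∀ w, ((hT.equiv (r * w)).1 : G) = u r w := fun r hr w => by
    obtain ⟨hu, hρ, hrw⟩ := huρ r hr w
    rw [hrw, hT.equiv_mul_of_mem hu hρ]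
  have hτ : ∀ (x : G →₀ A) (y : H →₀ A), (∀ h : H, y h = ∑ r ∈ hRfin.toFinset,
      ∑ w ∈ x.support, if u r w = h then r • x w else 0) → y = transferChain hT hRfin x :=
    fun x y hy => Finsupp.ext fun h => by rw [hy, transferChain_apply hT hRfin hu]
  let τ : paperZ1 G A →+ paperZ1 H A :=
    ((transferChain hT hRfin).comp (paperZ1 G A).subtype).codRestrict _
      fun x => mem_paperZ1_of_smul_eq_self (fun (h : H) => htriv h h.2) _
  have hτB : (paperB1 G A).addSubgroupOf (paperZ1 G A) ≤
      ((paperB1 H A).addSubgroupOf (paperZ1 H A)).comap τ := fun x hx =>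
    transferChain_mem_paperB1 hT hRfin htriv hx
  refine ⟨fun x => ⟨τ x, fun h => transferChain_apply hT hRfin hu _ h⟩,
    QuotientAddGroup.map _ _ τ hτB, fun x y hy => ?_, fun g x y y' hy hy' => ?_⟩
  · rw [QuotientAddGroup.map_mk]
    exact congrArg _ (Subtype.ext (hτ _ _ hy).symm)
  · have hy'conj : (y' : H →₀ A) = conjChain g y := Finsupp.ext fun h => by
      rw [hy', conjChain_apply]
      congr 2
      ext
      simp [MulAut.conjNormal_symm_apply]
    rw [QuotientAddGroup.eq, AddSubgroup.mem_addSubgroupOf]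
    simpa [hy'conj, hτ _ _ hy, neg_add_eq_sub] using
      neg_mem (conjChain_transferChain_sub_mem_paperB1 hT hRfin htriv g x.2)
end

section
/- Let G be a group, H a normal subgroup acting trivially on a G-module A, and Q = G/H with the induced action on A. For a finitely supported 1-cycle x : G → A define y : Q → A by y(q) = ∑_{w ∈ G with wH = q} x(w) (a finite sum since x is finitely supported). Then y is a finitely supported 1-cycle for Q, 1-boundaries are sent to 1-boundaries, and the assignment [x] ↦ [y] is a well-defined group homomorphism coinf : H₁(G, A) → H₁(Q, A). -/
/-! Pushing chains forward along a homomorphism `φ : G →* K` that is compatible with the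
actions on `A` commutes with the cycle map and with the degree-2 bar differential, so it sends
1-cycles to 1-cycles and 1-boundaries to 1-boundaries and hence induces a map on `H₁`.
Coinflation is the case `φ = G → G ⧸ H`, where the pushforward sums `x` over each coset. -/

section Functoriality

variable {G K A : Type*} [Group G] [Group K] [AddCommGroup A]
  [DistribMulAction G A] [DistribMulAction K A] (φ : G →* K)
  (hφ : ∀ (g : G) (a : A), φ g • a = g • a)
include hφ

theorem paperCycleMap_comp_mapDomain :
    (paperCycleMap K A).comp (Finsupp.mapDomain.addMonoidHom φ) = paperCycleMap G A := by
  ext g a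
  simp [paperCycleMap, Finsupp.mapDomain_single, ← map_inv, hφ]

theorem mapDomain_comp_paperBarD2 :
    (Finsupp.mapDomain.addMonoidHom φ).comp (paperBarD2 G A)
      = (paperBarD2 K A).comp (Finsupp.mapDomain.addMonoidHom (Prod.map φ φ)) := by
  ext p a : 2
  simp only [AddMonoidHom.comp_apply, Finsupp.singleAddHom_apply, paperBarD2,
    Finsupp.liftAddHom_apply_single, AddMonoidHom.sub_apply, AddMonoidHom.add_apply, map_sub,
    map_add]
  simp [Finsupp.mapDomain_single, ← map_inv, hφ]

theorem mapDomain_mem_paperZ1 {x : G →₀ A} (hx : x ∈ paperZ1 G A) :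
    x.mapDomain φ ∈ paperZ1 K A := by
  have h := DFunLike.congr_fun (paperCycleMap_comp_mapDomain φ hφ) x
  exact AddMonoidHom.mem_ker.2 (h.trans hx)

theorem mapDomain_mem_paperB1 {x : G →₀ A} (hx : x ∈ paperB1 G A) :
    x.mapDomain φ ∈ paperB1 K A := by
  obtain ⟨z, rfl⟩ := hx
  exact ⟨z.mapDomain (Prod.map φ φ),
    (DFunLike.congr_fun (mapDomain_comp_paperBarD2 φ hφ) z).symm⟩

noncomputable def paperZ1Map : paperZ1 G A →+ paperZ1 K A :=
  ((Finsupp.mapDomain.addMonoidHom φ).comp (paperZ1 G A).subtype).codRestrict _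
    fun x => mapDomain_mem_paperZ1 φ hφ x.2

noncomputable def paperH1Map : paperH1 G A →+ paperH1 K A :=
  QuotientAddGroup.map _ _ (paperZ1Map φ hφ) fun x hx => by
    rw [AddSubgroup.mem_addSubgroupOf] at hx
    exact mapDomain_mem_paperB1 φ hφ hx

theorem paperH1Map_mk (x : paperZ1 G A) :
    paperH1Map φ hφ (QuotientAddGroup.mk x) = QuotientAddGroup.mk (paperZ1Map φ hφ x) :=
  rfl

end Functoriality

theorem stmt5_general {G : Type} [Group G] (H : Subgroup G) [H.Normal] (A : Type) [AddCommGroup A]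
    [DistribMulAction G A] [DistribMulAction (G ⧸ H) A] [DecidableEq (G ⧸ H)]
    (hcomp : ∀ (g : G) (a : A), (g : G ⧸ H) • a = g • a) :
    (∀ x : paperZ1 G A, ∃ y : paperZ1 (G ⧸ H) A, ∀ q : G ⧸ H,
        (y : (G ⧸ H) →₀ A) q
          = ∑ w ∈ (x : G →₀ A).support.filter (fun w : G => (w : G ⧸ H) = q),
              (x : G →₀ A) w) ∧
      ∃ coinf : paperH1 G A →+ paperH1 (G ⧸ H) A,
        ∀ (x : paperZ1 G A) (y : paperZ1 (G ⧸ H) A),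
          (∀ q : G ⧸ H, (y : (G ⧸ H) →₀ A) q
              = ∑ w ∈ (x : G →₀ A).support.filter (fun w : G => (w : G ⧸ H) = q),
                  (x : G →₀ A) w) →
            coinf (QuotientAddGroup.mk x) = QuotientAddGroup.mk y := by
  have hpush : ∀ (x : paperZ1 G A) (q : G ⧸ H),
      (paperZ1Map (QuotientGroup.mk' H) hcomp x : (G ⧸ H) →₀ A) q
        = ∑ w ∈ (x : G →₀ A).support.filter (fun w : G => (w : G ⧸ H) = q),
            (x : G →₀ A) w := by
    rintro x ⟨g⟩
    exact Finsupp.mapDomain_apply_eq_sum _ _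
  refine ⟨fun x => ⟨_, hpush x⟩, paperH1Map (QuotientGroup.mk' H) hcomp, fun x y hy => ?_⟩
  have hxy : paperZ1Map (QuotientGroup.mk' H) hcomp x = y :=
    Subtype.ext <| Finsupp.ext fun q => (hpush x q).trans (hy q).symm
  exact (paperH1Map_mk _ hcomp x).trans (congrArg _ hxy)

/-- Let `G` be a group, `H` a normal subgroup acting trivially on the
`G`-module `A`, and `Q = G/H` with the induced action.  Pushing a finitely supported
1-cycle `x : G → A` forward to `y : Q → A`, `y q = ∑_{w ∈ G, wH = q} x w`, sends 1-cycles
to 1-cycles and induces a well-defined homomorphism `coinf : H₁(G, A) → H₁(Q, A)`. -/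
theorem stmt5 {G : Type} [Group G] (H : Subgroup G) [H.Normal] (A : Type) [AddCommGroup A]
    [DistribMulAction G A] [DistribMulAction (G ⧸ H) A] [DecidableEq (G ⧸ H)]
    (hcomp : ∀ (g : G) (a : A), (g : G ⧸ H) • a = g • a)
    (htriv : ∀ h ∈ H, ∀ a : A, h • a = a) :
    (∀ x : paperZ1 G A, ∃ y : paperZ1 (G ⧸ H) A, ∀ q : G ⧸ H,
        (y : (G ⧸ H) →₀ A) q
          = ∑ w ∈ (x : G →₀ A).support.filter (fun w : G => (w : G ⧸ H) = q),
              (x : G →₀ A) w) ∧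
      ∃ coinf : paperH1 G A →+ paperH1 (G ⧸ H) A,
        ∀ (x : paperZ1 G A) (y : paperZ1 (G ⧸ H) A),
          (∀ q : G ⧸ H, (y : (G ⧸ H) →₀ A) q
              = ∑ w ∈ (x : G →₀ A).support.filter (fun w : G => (w : G ⧸ H) = q),
                  (x : G →₀ A) w) →
            coinf (QuotientAddGroup.mk x) = QuotientAddGroup.mk y :=
  stmt5_general H A hcomp
end

section
/- Let G be a finite group, B a G-module, A ⊆ B a G-submodule, C = B/A the quotient G-module with quotient map μ : B → C, and let N denote the norm map N(m) = ∑_{g ∈ G} g·m on each of these modules. Then the assignment sending an element z = N(x) of A ∩ N(B) (for any x ∈ B with N(x) = z) to the class of μ(x) induces a well-defined injective group homomorphism from (A ∩ N(B)) / N(A) to ker(N : C → C) / (I_G·C + μ(ker(N : B → B))). -/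
/-- The norm map `m ↦ ∑_{g ∈ G} g • m` of a finite group `G` acting on an abelian
group `M`, as an additive homomorphism. -/
noncomputable def paperNormHom (G M : Type*) [Group G] [Fintype G] [AddCommGroup M]
    [DistribMulAction G M] : M →+ M :=
  ∑ g : G, DistribMulAction.toAddMonoidHom M g

/-- The subgroup `I_G·M` generated by the elements `g • m - m`. -/
def paperAugSub (G M : Type*) [Group G] [AddCommGroup M] [DistribMulAction G M] :
    AddSubgroup M :=
  AddSubgroup.closure {x : M | ∃ (g : G) (m : M), x = g • m - m}

/-!
Let `P = N⁻¹(A) ⊆ B`. Both `x ↦ [N x]` and `x ↦ [μ x]` are homomorphisms out of `P`, the first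
onto `(A ∩ N(B)) / N(A)`, so the map `ψ` exists and is injective as soon as they have the same
kernel. Since `I_G·C = μ(I_G·B) ⊆ μ(ker N)`, the second kernel is `{x | μ x ∈ μ(ker N)}`, i.e.
`P ∩ (ker N + A)`, which is exactly where `N x ∈ N(A)`.
-/

theorem AddMonoidHom.exists_injective_comp_eq_of_ker_eq {P Q R : Type*} [AddGroup P]
    [AddGroup Q] [AddGroup R] (α : P →+ Q) (β : P →+ R) (hα : Function.Surjective α)
    (hker : α.ker = β.ker) : ∃ ψ : Q →+ R, Function.Injective ψ ∧ ∀ p, ψ (α p) = β p := by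
  set ψ := α.liftOfSurjective hα ⟨β, hker.le⟩
  have hψ : ∀ p, ψ (α p) = β p := α.liftOfRightInverse_comp_apply _ _ ⟨β, hker.le⟩
  refine ⟨ψ, (injective_iff_map_eq_zero ψ).mpr fun q hq => ?_, hψ⟩
  obtain ⟨p, rfl⟩ := hα q
  rwa [hψ, ← β.mem_ker, ← hker, α.mem_ker] at hq

/-- Both sides say `x ∈ f.ker ⊔ g.ker`. -/
theorem AddMonoidHom.apply_mem_map_ker_iff {M N P : Type*} [AddGroup M] [AddGroup N]
    [AddGroup P] (f : M →+ N) (g : M →+ P) (x : M) :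
    f x ∈ g.ker.map f ↔ g x ∈ f.ker.map g := by
  rw [← AddSubgroup.mem_comap, AddSubgroup.comap_map_eq, ← AddSubgroup.mem_comap,
    AddSubgroup.comap_map_eq, sup_comm]

section NormMap

variable {G : Type*} [Group G] [Fintype G]

theorem paperNormHom_apply {M : Type*} [AddCommGroup M] [DistribMulAction G M] (m : M) :
    paperNormHom G M m = ∑ g : G, g • m := by
  simp [paperNormHom]

theorem paperNormHom_smul {M : Type*} [AddCommGroup M] [DistribMulAction G M] (g : G) (m : M) :
    paperNormHom G M (g • m) = paperNormHom G M m := by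
  simp only [paperNormHom_apply, smul_smul]
  exact Fintype.sum_equiv (Equiv.mulRight g) _ _ fun _ => rfl

theorem paperNormHom_map {M M' : Type*} [AddCommGroup M] [AddCommGroup M']
    [DistribMulAction G M] [DistribMulAction G M'] (f : M →+ M')
    (hf : ∀ (g : G) (m : M), f (g • m) = g • f m) (m : M) :
    paperNormHom G M' (f m) = f (paperNormHom G M m) := by
  simp [paperNormHom_apply, hf]

theorem paperAugSub_le_ker_paperNormHom {M : Type*} [AddCommGroup M] [DistribMulAction G M] :
    paperAugSub G M ≤ (paperNormHom G M).ker := by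
  rw [paperAugSub, AddSubgroup.closure_le]
  rintro _ ⟨g, m, rfl⟩
  simp [AddMonoidHom.mem_ker, paperNormHom_smul]

end NormMap

theorem paperAugSub_le_map {G M M' : Type*} [Group G] [AddCommGroup M] [AddCommGroup M']
    [DistribMulAction G M] [DistribMulAction G M'] (f : M →+ M') (hf : Function.Surjective f)
    (hfG : ∀ (g : G) (m : M), f (g • m) = g • f m) :
    paperAugSub G M' ≤ (paperAugSub G M).map f := by
  rw [paperAugSub, AddSubgroup.closure_le]
  rintro _ ⟨g, m', rfl⟩
  obtain ⟨m, rfl⟩ := hf m'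
  exact ⟨g • m - m, AddSubgroup.subset_closure ⟨g, m, rfl⟩, by simp [hfG]⟩

theorem apply_mem_paperAugSub_sup_map_ker_iff {G A B C : Type*} [Group G] [Fintype G]
    [AddCommGroup A] [AddCommGroup B] [AddCommGroup C]
    [DistribMulAction G A] [DistribMulAction G B] [DistribMulAction G C]
    (ι : A →+ B) (μ : B →+ C) (hμ : Function.Surjective μ)
    (hexact : ∀ b : B, μ b = 0 ↔ b ∈ ι.range)
    (hιG : ∀ (g : G) (a : A), ι (g • a) = g • ι a)
    (hμG : ∀ (g : G) (b : B), μ (g • b) = g • μ b) (x : B) :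
    μ x ∈ paperAugSub G C ⊔ (paperNormHom G B).ker.map μ ↔
      paperNormHom G B x ∈ (ι.comp (paperNormHom G A)).range := by
  have hker : μ.ker = ι.range := AddSubgroup.ext hexact
  have hNι : (paperNormHom G B).comp ι = ι.comp (paperNormHom G A) :=
    AddMonoidHom.ext (paperNormHom_map ι hιG)
  have haug : paperAugSub G C ≤ (paperNormHom G B).ker.map μ :=
    (paperAugSub_le_map μ hμ hμG).trans (AddSubgroup.map_mono paperAugSub_le_ker_paperNormHom)
  rw [sup_eq_right.mpr haug, μ.apply_mem_map_ker_iff, hker, AddMonoidHom.map_range, hNι]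

theorem stmt7_general {G A B C : Type} [Group G] [Fintype G]
    [AddCommGroup A] [AddCommGroup B] [AddCommGroup C]
    [DistribMulAction G A] [DistribMulAction G B] [DistribMulAction G C]
    (ι : A →+ B) (μ : B →+ C) (hμ : Function.Surjective μ)
    (hexact : ∀ b : B, μ b = 0 ↔ b ∈ ι.range)
    (hιG : ∀ (g : G) (a : A), ι (g • a) = g • ι a)
    (hμG : ∀ (g : G) (b : B), μ (g • b) = g • μ b) :
    ∃ ψ : ((ι.range ⊓ (paperNormHom G B).range : AddSubgroup B) ⧸
            ((ι.comp (paperNormHom G A)).range.addSubgroupOf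
              (ι.range ⊓ (paperNormHom G B).range))) →+
          (((paperNormHom G C).ker : AddSubgroup C) ⧸
            ((paperAugSub G C ⊔ (paperNormHom G B).ker.map μ).addSubgroupOf (paperNormHom G C).ker)),
      Function.Injective ψ ∧
        ∀ (x : B) (hx : paperNormHom G B x ∈ ι.range) (hc : μ x ∈ (paperNormHom G C).ker),
          ψ (QuotientAddGroup.mk ⟨paperNormHom G B x, hx, ⟨x, rfl⟩⟩)
            = QuotientAddGroup.mk ⟨μ x, hc⟩ := by
  set N := paperNormHom G B
  set P := ι.range.comap N
  set S := ι.range ⊓ N.range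
  set K := (paperNormHom G C).ker
  have hP : ∀ x : P, μ x ∈ K := fun ⟨x, a, ha⟩ => by
    rw [AddMonoidHom.mem_ker, paperNormHom_map μ hμG, ← ha]
    exact (hexact _).mpr ⟨a, rfl⟩
  let α := (QuotientAddGroup.mk' ((ι.comp (paperNormHom G A)).range.addSubgroupOf S)).comp
    ((N.comp P.subtype).codRestrict S fun x => ⟨x.2, x, rfl⟩)
  let β := (QuotientAddGroup.mk' ((paperAugSub G C ⊔ N.ker.map μ).addSubgroupOf K)).comp
    ((μ.comp P.subtype).codRestrict K hP)
  have hα : Function.Surjective α := by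
    refine (QuotientAddGroup.mk'_surjective _).comp ?_
    rintro ⟨_, hx, x, rfl⟩
    exact ⟨⟨x, hx⟩, rfl⟩
  have hker : α.ker = β.ker := by
    ext x
    simp only [α, β, AddMonoidHom.mem_ker, AddMonoidHom.comp_apply, QuotientAddGroup.mk'_apply,
      QuotientAddGroup.eq_zero_iff, AddSubgroup.mem_addSubgroupOf]
    exact (apply_mem_paperAugSub_sup_map_ker_iff ι μ hμ hexact hιG hμG x).symm
  obtain ⟨ψ, hψ, hψα⟩ := α.exists_injective_comp_eq_of_ker_eq β hα hker
  exact ⟨ψ, hψ, fun x hx _ => hψα ⟨x, hx⟩⟩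

/-- Let `G` be a finite group, `A ⊆ B` an inclusion of `G`-modules with
quotient `μ : B → C` (formalized as a short exact sequence of `G`-modules
`0 → A →ι B →μ C → 0`), and let `N` denote the norm map on each module.  Sending
`z = N(x) ∈ A ∩ N(B)` to the class of `μ(x)` gives a well-defined injective homomorphism
`(A ∩ N(B)) / N(A) → ker(N : C → C) / (I_G·C + μ(ker(N : B → B)))`. -/
theorem stmt7 {G A B C : Type} [Group G] [Fintype G]
    [AddCommGroup A] [AddCommGroup B] [AddCommGroup C]
    [DistribMulAction G A] [DistribMulAction G B] [DistribMulAction G C]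
    (ι : A →+ B) (μ : B →+ C) (hι : Function.Injective ι) (hμ : Function.Surjective μ)
    (hexact : ∀ b : B, μ b = 0 ↔ b ∈ ι.range)
    (hιG : ∀ (g : G) (a : A), ι (g • a) = g • ι a)
    (hμG : ∀ (g : G) (b : B), μ (g • b) = g • μ b) :
    ∃ ψ : ((ι.range ⊓ (paperNormHom G B).range : AddSubgroup B) ⧸
            ((ι.comp (paperNormHom G A)).range.addSubgroupOf
              (ι.range ⊓ (paperNormHom G B).range))) →+
          (((paperNormHom G C).ker : AddSubgroup C) ⧸
            ((paperAugSub G C ⊔ (paperNormHom G B).ker.map μ).addSubgroupOf (paperNormHom G C).ker)),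
      Function.Injective ψ ∧
        ∀ (x : B) (hx : paperNormHom G B x ∈ ι.range) (hc : μ x ∈ (paperNormHom G C).ker),
          ψ (QuotientAddGroup.mk ⟨paperNormHom G B x, hx, ⟨x, rfl⟩⟩)
            = QuotientAddGroup.mk ⟨μ x, hc⟩ :=
  stmt7_general ι μ hμ hexact hιG hμG
end

section
/- Let G be a finite group and let A, B be G-modules. Let f : G × G → B be a 2-cocycle (g·f(h, k) − f(gh, k) + f(g, hk) − f(g, h) = 0 for all g, h, k ∈ G) and let x : G → A be a 1-cycle (∑_{h ∈ G} h⁻¹·x(h) = ∑_{h ∈ G} x(h)). Then the element F = ∑_{g, h ∈ G} f(g, h) ⊗ (g·x(h)) of B ⊗_ℤ A, where G acts diagonally on B ⊗_ℤ A, is G-invariant: k·F = F for every k ∈ G. -/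
open TensorProduct

/-- For a finite group `G`, `G`-modules `A`, `B`, a 2-cocycle
`f : G × G → B` and a 1-cycle `x : G → A`, the element
`F = ∑_{g,h} f(g,h) ⊗ g•x(h)` of `B ⊗_ℤ A` (with the diagonal `G`-action) is
`G`-invariant. -/
theorem stmt19 {G B A : Type*} [Group G] [Fintype G] [AddCommGroup B] [AddCommGroup A]
    [DistribMulAction G B] [DistribMulAction G A]
    (f : G × G → B)
    (hf : ∀ g h k : G, g • f (h, k) - f (g * h, k) + f (g, h * k) - f (g, h) = 0)
    (x : G → A) (hx : ∑ h : G, h⁻¹ • x h = ∑ h : G, x h) :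
    ∀ k : G,
      TensorProduct.map (DistribMulAction.toAddMonoidHom B k).toIntLinearMap
          (DistribMulAction.toAddMonoidHom A k).toIntLinearMap
          (∑ g : G, ∑ h : G, f (g, h) ⊗ₜ[ℤ] (g • x h))
        = ∑ g : G, ∑ h : G, f (g, h) ⊗ₜ[ℤ] (g • x h) := by
  intro k
  have hcf : ∀ g h : G, k • f (g, h) = f (k * g, h) - f (k, g * h) + f (k, g) := by
    intro g h
    have h1 := hf k g h
    rw [← sub_eq_zero, ← h1]
    abel
  simp only [map_sum, TensorProduct.map_tmul, AddMonoidHom.coe_toIntLinearMap,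
    DistribMulAction.toAddMonoidHom_apply, smul_smul, hcf, sub_tmul, add_tmul]
  simp only [Finset.sum_add_distrib, Finset.sum_sub_distrib]
  have e1 : ∑ g : G, ∑ h : G, f (k * g, h) ⊗ₜ[ℤ] ((k * g) • x h)
      = ∑ g : G, ∑ h : G, f (g, h) ⊗ₜ[ℤ] (g • x h) :=
    Fintype.sum_equiv (Equiv.mulLeft k) _ _ (fun g => by simp)
  have e2 : ∑ g : G, ∑ h : G, f (k, g * h) ⊗ₜ[ℤ] ((k * g) • x h)
      = ∑ g : G, ∑ h : G, f (k, g) ⊗ₜ[ℤ] ((k * g) • x h) := by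
    have inner : ∀ g : G, ∑ h : G, f (k, g * h) ⊗ₜ[ℤ] ((k * g) • x h)
        = ∑ s : G, f (k, s) ⊗ₜ[ℤ] ((k * g) • x (g⁻¹ * s)) := fun g =>
      Fintype.sum_equiv (Equiv.mulLeft g) _ _ (fun h => by simp)
    simp only [inner]
    rw [Finset.sum_comm]
    have innerA : ∀ s : G, ∑ g : G, (k * g) • x (g⁻¹ * s) = (k * s) • ∑ t : G, x t := by
      intro s
      have : ∑ g : G, (k * g) • x (g⁻¹ * s) = ∑ t : G, ((k * s) * t⁻¹) • x t := by
        refine Fintype.sum_equiv ((Equiv.inv G).trans (Equiv.mulRight s)) _ _ (fun t => ?_)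
        simp [mul_assoc]
      rw [this]
      simp only [mul_smul (k * s), ← Finset.smul_sum, hx]
    have innerB : ∀ g : G, ∑ h : G, f (k, g) ⊗ₜ[ℤ] ((k * g) • x h)
        = f (k, g) ⊗ₜ[ℤ] ((k * g) • ∑ t : G, x t) := by
      intro g
      rw [← tmul_sum, ← Finset.smul_sum]
    calc ∑ s : G, ∑ g : G, f (k, s) ⊗ₜ[ℤ] ((k * g) • x (g⁻¹ * s))
        = ∑ s : G, f (k, s) ⊗ₜ[ℤ] (∑ g : G, (k * g) • x (g⁻¹ * s)) := by
          simp only [tmul_sum]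
      _ = ∑ s : G, f (k, s) ⊗ₜ[ℤ] ((k * s) • ∑ t : G, x t) := by
          simp only [innerA]
      _ = ∑ g : G, ∑ h : G, f (k, g) ⊗ₜ[ℤ] ((k * g) • x h) := by
          simp only [innerB]
  rw [e1, e2]
  abel
end
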